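/- arXiv:2212.00319 — 2 statements merged into one kernel-verified Lean document; each statement's English description precedes it below -/
import Mathlib

section
/- If (J, u*) is observable with J Hermitian and a ∈ ℝ, then the matrix A = [[J, u], [−u*, a]] is nonderogatory: every eigenvalue of A has a one-dimensional eigenspace. -/
/-!
Let `x` be an eigenvector of `A` for `λ`. If its last coordinate vanished, its first block `v`
would satisfy `J v = λ v` and `u* v = 0`, i.e. lie in the kernel of `[λI − J; u*]`, which
observability forbids. Hence the last coordinate is injective on each eigenspace of `A`, so every
eigenspace has dimension at most one.
-/

open Matrix

/-- Observability of the pair `(J, u*)`. -/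
def IsObservable {m : ℕ} (J : Matrix (Fin m) (Fin m) ℂ) (u : Fin m → ℂ) : Prop :=
  ∀ lam : ℂ,
    (Matrix.fromRows (lam • (1 : Matrix (Fin m) (Fin m) ℂ) - J)
      (Matrix.replicateRow Unit (star u))).rank = m

open Module

theorem Matrix.mulVec_injective_of_rank_eq_card {R m n : Type*} [CommRing R] [Nontrivial R]
    [Fintype n] {M : Matrix m n R} (h : M.rank = Fintype.card n) : Function.Injective M.mulVec := by
  rw [mulVec_injective_iff, linearIndependent_iff_card_eq_finrank_span, Set.finrank,
    ← rank_eq_finrank_span_cols, h]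

theorem Matrix.fromBlocks_mulVec_sum_elim_zero {R l m n o : Type*} [NonUnitalNonAssocSemiring R]
    [Fintype l] [Fintype m] (A : Matrix n l R) (B : Matrix n m R) (C : Matrix o l R)
    (D : Matrix o m R) (v : l → R) :
    fromBlocks A B C D *ᵥ Sum.elim v 0 = Sum.elim (A *ᵥ v) (C *ᵥ v) := by
  simp [fromBlocks_mulVec]

theorem Submodule.finrank_le_one_of_disjoint_ker {K V : Type*} [Field K] [AddCommGroup V]
    [Module K V] {p : Submodule K V} (φ : V →ₗ[K] K) (h : Disjoint p (LinearMap.ker φ)) :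
    finrank K p ≤ 1 :=
  (LinearMap.finrank_le_finrank_of_injective (LinearMap.injective_domRestrict_iff.mpr h)).trans_eq
    (finrank_self K)

theorem IsObservable.eq_zero_of_mulVec_eq_smul {m : ℕ} {J : Matrix (Fin m) (Fin m) ℂ}
    {u : Fin m → ℂ} (hobs : IsObservable J u) {lam : ℂ} {v : Fin m → ℂ}
    (hv : J *ᵥ v = lam • v) (hu : star u ⬝ᵥ v = 0) : v = 0 := by
  refine Matrix.mulVec_injective_of_rank_eq_card ((hobs lam).trans (Fintype.card_fin m).symm) ?_
  rw [mulVec_zero, fromRows_mulVec, sub_mulVec, smul_mulVec, one_mulVec, hv, sub_self,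
    replicateRow_mulVec_eq_const, hu]
  ext (_ | _) <;> rfl

theorem stmt_5_general {m : ℕ} (J : Matrix (Fin m) (Fin m) ℂ)
    (u : Fin m → ℂ) (a : ℝ) (hobs : IsObservable J u) :
    let A : Matrix (Fin m ⊕ Unit) (Fin m ⊕ Unit) ℂ :=
      Matrix.fromBlocks J (Matrix.replicateCol Unit u) (-(Matrix.replicateRow Unit (star u)))
        (Matrix.of fun _ _ => (a : ℂ))
    ∀ lam : ℂ, lam ∈ spectrum ℂ A →
      Module.finrank ℂ (Module.End.eigenspace (Matrix.toLin' A) lam) = 1 := by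
  intro A lam hlam
  have heig : Module.End.HasEigenvalue (toLin' A) lam := by
    rwa [Module.End.hasEigenvalue_iff_mem_spectrum, spectrum_toLin']
  refine le_antisymm (Submodule.finrank_le_one_of_disjoint_ker (LinearMap.proj (Sum.inr ())) ?_)
    (Submodule.one_le_finrank_iff.mpr heig)
  rw [Submodule.disjoint_def]
  intro x hx hlast
  have hx_eq : x = Sum.elim (x ∘ Sum.inl) 0 := by
    ext (_ | ⟨⟩)
    exacts [rfl, hlast]
  rw [Module.End.mem_eigenspace_iff, toLin'_apply, hx_eq, fromBlocks_mulVec_sum_elim_zero] at hx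
  have hv : J *ᵥ (x ∘ Sum.inl) = lam • (x ∘ Sum.inl) := congrArg (· ∘ Sum.inl) hx
  have hu : star u ⬝ᵥ (x ∘ Sum.inl) = 0 := by
    simpa [neg_mulVec, replicateRow_mulVec_eq_const] using congrFun hx (Sum.inr ())
  rw [hx_eq, hobs.eq_zero_of_mulVec_eq_smul hv hu, Sum.elim_zero_zero]

/-- If `(J, u*)` is observable with `J` Hermitian and `a ∈ ℝ`, then
`A = [[J, u], [-u*, a]]` is nonderogatory: every eigenvalue of `A` has a
one-dimensional eigenspace. -/
theorem stmt_5 {m : ℕ} (J : Matrix (Fin m) (Fin m) ℂ) (hJ : J.IsHermitian)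
    (u : Fin m → ℂ) (a : ℝ) (hobs : IsObservable J u) :
    let A : Matrix (Fin m ⊕ Unit) (Fin m ⊕ Unit) ℂ :=
      Matrix.fromBlocks J (Matrix.replicateCol Unit u) (-(Matrix.replicateRow Unit (star u)))
        (Matrix.of fun _ _ => (a : ℂ))
    ∀ lam : ℂ, lam ∈ spectrum ℂ A →
      Module.finrank ℂ (Module.End.eigenspace (Matrix.toLin' A) lam) = 1 :=
  stmt_5_general J u a hobs
end

section
/- Let A = [[J, u], [−u*, a]] with (J, u*) observable, J Hermitian, a ∈ ℝ. If x = (x₁, x₂) is an eigenvector of A with eigenvalue λ₀, then x₂ ≠ 0, and x₁ = x₂·(λ₀I − J)^{-1}u. -/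
/-! If `x₂ = 0`, the first block row says `(λ₀I - J) x₁ = 0` and the second `u* x₁ = 0`, so
observability forces `x₁ = 0`. Hence `u = (λ₀I - J)(x₁ / x₂)` lies in the range of `λ₀I - J`.
A null vector `v` of `λ₀I - J` is an eigenvector of the Hermitian `J`, so `λ₀` is real and `v` is
also a left null vector; then `u* v = (x₁ / x₂)* (λ₀I - J) v = 0`, and observability gives `v = 0`.
So `λ₀I - J` is invertible, and the first block row solves for `x₁`. -/

open Matrix

namespace Matrix

variable {m n R : Type*} [Fintype n]

theorem mulVec_injective_of_rank_eq_card_s6 [Field R] (B : Matrix m n R)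
    (h : B.rank = Fintype.card n) : Function.Injective B.mulVec := by
  have hdim := LinearMap.finrank_range_add_finrank_ker B.mulVecLin
  rwa [← Matrix.rank, h, Module.finrank_fintype_fun_eq_card, add_eq_left,
    Submodule.finrank_eq_zero, LinearMap.ker_eq_bot] at hdim

theorem IsHermitian.star_eq_of_mulVec_eq_smul [CommRing R] [StarRing R] [PartialOrder R]
    [StarOrderedRing R] [NoZeroDivisors R] {J : Matrix n n R} (hJ : J.IsHermitian) {μ : R}
    {v : n → R} (hv : v ≠ 0) (hJv : J *ᵥ v = μ • v) : star μ = μ := by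
  have hvv : star v ⬝ᵥ v ≠ 0 := dotProduct_star_self_eq_zero.not.mpr hv
  refine mul_right_cancel₀ hvv ?_
  calc star μ * (star v ⬝ᵥ v)
      = star (J *ᵥ v) ⬝ᵥ v := by rw [hJv, star_smul, smul_dotProduct, smul_eq_mul]
    _ = star v ⬝ᵥ J *ᵥ v := by rw [star_mulVec, hJ.eq, dotProduct_mulVec]
    _ = μ * (star v ⬝ᵥ v) := by rw [hJv, dotProduct_smul, smul_eq_mul]

theorem mulVec_fromBlocks_replicate_eq_smul [DecidableEq n] [CommRing R] [Star R]
    {J : Matrix n n R} {u : n → R} {a lam : R} {x : n ⊕ Unit → R}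
    (h : fromBlocks J (replicateCol Unit u) (-replicateRow Unit (star u)) (of fun _ _ => a) *ᵥ x
      = lam • x) :
    (lam • (1 : Matrix n n R) - J) *ᵥ (fun i => x (Sum.inl i)) = x (Sum.inr ()) • u ∧
      star u ⬝ᵥ (fun i => x (Sum.inl i)) = (a - lam) * x (Sum.inr ()) := by
  rw [fromBlocks_mulVec] at h
  constructor
  · have h₁ :
        J *ᵥ (fun i => x (Sum.inl i)) + x (Sum.inr ()) • u = lam • fun i => x (Sum.inl i) :=
      funext fun i => by
        simpa [mulVec, dotProduct, replicateCol, mul_comm] using congrFun h (Sum.inl i)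
    rw [sub_mulVec, smul_mulVec, one_mulVec, ← h₁, add_sub_cancel_left]
  · have h₂ := congrFun h (Sum.inr ())
    simp [mulVec, dotProduct, replicateRow] at h₂ ⊢
    linear_combination -h₂

end Matrix

namespace IsObservable

open scoped ComplexOrder

variable {m : ℕ} {J : Matrix (Fin m) (Fin m) ℂ} {u : Fin m → ℂ}

theorem eq_zero_of_mulVec_eq_zero (hobs : IsObservable J u) {lam : ℂ} {v : Fin m → ℂ}
    (hv : (lam • (1 : Matrix (Fin m) (Fin m) ℂ) - J) *ᵥ v = 0) (huv : star u ⬝ᵥ v = 0) :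
    v = 0 := by
  refine mulVec_injective_of_rank_eq_card_s6 _ (by rw [hobs lam, Fintype.card_fin]) ?_
  rw [fromRows_mulVec, hv, mulVec_zero]
  ext (i | ⟨⟩)
  · rfl
  · simpa [mulVec, replicateRow, dotProduct] using huv

theorem isUnit_det_sub_of_mulVec_eq (hobs : IsObservable J u) (hJ : J.IsHermitian) {lam : ℂ}
    {w : Fin m → ℂ} (hw : (lam • (1 : Matrix (Fin m) (Fin m) ℂ) - J) *ᵥ w = u) :
    IsUnit (lam • (1 : Matrix (Fin m) (Fin m) ℂ) - J).det := by
  set M := lam • (1 : Matrix (Fin m) (Fin m) ℂ) - J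
  rw [isUnit_iff_ne_zero]
  intro hdet
  obtain ⟨v, hv, hMv⟩ := exists_mulVec_eq_zero_iff.mpr hdet
  have hJv : J *ᵥ v = lam • v := by
    rw [← sub_eq_zero, ← neg_eq_zero, ← hMv]
    simp [M, sub_mulVec, smul_mulVec]
  have hMH : Mᴴ = M := by
    have hlam : star lam = lam := hJ.star_eq_of_mulVec_eq_smul hv hJv
    rw [conjTranspose_sub, conjTranspose_smul, conjTranspose_one, hJ.eq, hlam]
  have huv : star u ⬝ᵥ v = 0 := by
    rw [← hw, star_mulVec, hMH, ← dotProduct_mulVec, hMv, dotProduct_zero]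
  exact hv (hobs.eq_zero_of_mulVec_eq_zero hMv huv)

end IsObservable

/-- If `x = (x₁, x₂)` is an eigenvector of `A = [[J, u], [-u*, a]]` with eigenvalue `λ₀`,
with `(J, u*)` observable, then `x₂ ≠ 0` and `x₁ = x₂ · (λ₀I - J)⁻¹ u`. -/
theorem stmt_6 {m : ℕ} (J : Matrix (Fin m) (Fin m) ℂ) (hJ : J.IsHermitian)
    (u : Fin m → ℂ) (a : ℝ) (hobs : IsObservable J u)
    (lam0 : ℂ) (x : Fin m ⊕ Unit → ℂ) (hx : x ≠ 0)
    (heig :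
      (Matrix.fromBlocks J (Matrix.replicateCol Unit u) (-(Matrix.replicateRow Unit (star u)))
        (Matrix.of fun _ _ => (a : ℂ))) *ᵥ x = lam0 • x) :
    x (Sum.inr ()) ≠ 0 ∧
      (fun i => x (Sum.inl i)) =
        x (Sum.inr ()) • ((lam0 • (1 : Matrix (Fin m) (Fin m) ℂ) - J)⁻¹ *ᵥ u) := by
  obtain ⟨hrow₁, hrow₂⟩ := mulVec_fromBlocks_replicate_eq_smul heig
  set x₁ : Fin m → ℂ := fun i => x (Sum.inl i)
  set x₂ := x (Sum.inr ())
  have hx₂ : x₂ ≠ 0 := by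
    intro h0
    rw [h0, zero_smul] at hrow₁
    rw [h0, mul_zero] at hrow₂
    have hx₁ : x₁ = 0 := hobs.eq_zero_of_mulVec_eq_zero hrow₁ hrow₂
    exact hx (funext (Sum.rec (congrFun hx₁) fun _ => h0))
  have hunit := hobs.isUnit_det_sub_of_mulVec_eq hJ (w := x₂⁻¹ • x₁) <| by
    rw [mulVec_smul, hrow₁, smul_smul, inv_mul_cancel₀ hx₂, one_smul]
  refine ⟨hx₂, ?_⟩
  rw [← mulVec_smul, ← hrow₁, mulVec_mulVec, nonsing_inv_mul _ hunit, one_mulVec]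
end
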